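/- Let c = c^cr = 1/(4 log 2) and fix K > 0. There exists N₀ such that for every integer N ≥ N₀, every subset A ⊆ V_N with |A| ≤ K·N^{4/3}, and all vertices u, v ∈ V_N ∖ A, the two-step transition probability of the chain restricted to V_N ∖ A satisfies P_A²(u,v) = Σ_{x ∈ V_N∖A} P_A(u,x)·P_A(x,v) ≥ (c/2)·(1/N²). -/

import Mathlib

open scoped BigOperators

/-- Vertices of the discrete 2-dimensional torus. -/
abbrev Vtx (N : ℕ) : Type := ZMod N × ZMod N

/-- `ρ_N(i)`: for a residue represented in `{0,…,N−1}`, `ρ_N(i) = i` if `i ≤ N/2`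
and `ρ_N(i) = N − i` otherwise. -/
def rhoN (N : ℕ) (i : ZMod N) : ℕ :=
  if 2 * i.val ≤ N then i.val else N - i.val

/-- Torus distance `ρ(u,v) = ρ_N(u₁ − v₁) + ρ_N(u₂ − v₂)`. -/
def torusDist (N : ℕ) (u v : Vtx N) : ℕ :=
  rhoN N (u.1 - v.1) + rhoN N (u.2 - v.2)

/-- Connection probability `p(u,v) = min(c/(N·ρ(u,v)), 1)` for `u ≠ v`, `p(u,u) = 0`. -/
noncomputable def edgeProb (N : ℕ) (c : ℝ) (u v : Vtx N) : ℝ :=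
  if u = v then 0 else min (c / ((N : ℝ) * (torusDist N u v : ℝ))) 1

/-- The critical value `c^cr = 1/(4 log 2)`. -/
noncomputable def ccr : ℝ := 1 / (4 * Real.log 2)

/-- `Z_{N,A}(u) = Σ_{v ∈ V_N∖A, v ≠ u} p(u,v)`. -/
noncomputable def ZNA (N : ℕ) [NeZero N] (c : ℝ) (A : Finset (Vtx N)) (u : Vtx N) : ℝ :=
  ∑ v ∈ (Finset.univ \ A).erase u, edgeProb N c u v

/-- Transition matrix of the chain avoiding `A`:
`P_A(u,v) = p(u,v)/Z_{N,A}(u)` for `v ∉ A`, and `0` for `v ∈ A`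
(for distinct `u, v ∈ V_N∖A` this is `p(u,v)/Z_{N,A}(u)`, and `P_A(u,u) = 0`
since `p(u,u) = 0`). -/
noncomputable def transPA (N : ℕ) [NeZero N] (c : ℝ) (A : Finset (Vtx N))
    (u v : Vtx N) : ℝ :=
  if v ∈ A then 0 else edgeProb N c u v / ZNA N c A u

/-!
Off the diagonal, `c / N² ≤ p(u,v) ≤ c / (N ρ(u,v)) ≤ c / N`. Via the signed representatives
`ZMod.valMinAbs`, the torus sphere of radius `d` embeds into the `ℓ¹`-sphere of `ℤ²`, which has
`4d` points; hence `∑_v 1/ρ(x,v) ≤ 4N`, so `Z_{N,A}(x) ≤ 4c` and `P_A(x,v) ≥ 1/(4N²)` for all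
`x ≠ v ∉ A`. Once `N ≥ (4K)^{3/2}` we have `|A| ≤ N²/4`, so `Z_{N,A}(u) ≥ c/2` and
`P_A(u,v) ≤ 2/N`; summing over `x ≠ v` gives `P_A²(u,v) ≥ (1 - 2/N)/(4N²)`, which is at least
`c/(2N²)` for `N ≥ 8` because `2 c^cr < 3/4`.
-/

open Finset

lemma rhoN_eq_natAbs_valMinAbs {N : ℕ} [NeZero N] (i : ZMod N) :
    rhoN N i = i.valMinAbs.natAbs := by
  have hi := ZMod.val_lt i
  rw [rhoN, ZMod.valMinAbs_def_pos]
  split_ifs <;> omega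

lemma card_le_of_natAbs_add_natAbs_eq {d : ℕ} (hd : 0 < d) {s : Finset (ℤ × ℤ)}
    (hs : ∀ p ∈ s, p.1.natAbs + p.2.natAbs = d) : #s ≤ 4 * d := by
  -- the four half-open edges of the diamond `|a| + |b| = d`
  let edge : Fin 4 × ℕ → ℤ × ℤ := fun ik =>
    let k : ℤ := ik.2
    ![(d - k, k), (-k, d - k), (k - d, -k), (k, k - d)] ik.1
  have hsub : s ⊆ (univ ×ˢ range d).image edge := by
    rintro ⟨a, b⟩ hab
    have habd := hs _ hab
    simp only [mem_image, mem_product, mem_univ, mem_range, true_and, Prod.exists]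
    rcases lt_or_ge 0 a with ha | ha
    · rcases le_or_gt 0 b with hb | hb
      · exact ⟨0, b.natAbs, by omega, by simp [edge, abs_of_nonneg hb]; omega⟩
      · exact ⟨3, a.natAbs, by omega, by simp [edge, abs_of_pos ha]; omega⟩
    · rcases lt_or_ge 0 b with hb | hb
      · exact ⟨1, a.natAbs, by omega, by simp [edge, abs_of_nonpos ha]; omega⟩
      · rcases ha.lt_or_eq with ha | rfl
        · exact ⟨2, b.natAbs, by omega, by simp [edge, abs_of_nonpos hb]; omega⟩
        · exact ⟨3, 0, hd, by simp [edge]; omega⟩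
  calc #s ≤ #((univ ×ˢ range d).image edge) := card_le_card hsub
    _ ≤ #(univ ×ˢ range d) := card_image_le
    _ = 4 * d := by simp

section TorusDist

variable {N : ℕ} [NeZero N]

lemma torusDist_eq (u v : Vtx N) :
    torusDist N u v = (u.1 - v.1).valMinAbs.natAbs + (u.2 - v.2).valMinAbs.natAbs := by
  rw [torusDist, rhoN_eq_natAbs_valMinAbs, rhoN_eq_natAbs_valMinAbs]

lemma torusDist_le (u v : Vtx N) : torusDist N u v ≤ N := by
  have h₁ := ZMod.natAbs_valMinAbs_le (u.1 - v.1)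
  have h₂ := ZMod.natAbs_valMinAbs_le (u.2 - v.2)
  rw [torusDist_eq]
  omega

lemma torusDist_pos {u v : Vtx N} (h : u ≠ v) : 0 < torusDist N u v := by
  rw [Nat.pos_iff_ne_zero]
  contrapose! h
  simp only [torusDist_eq, Nat.add_eq_zero_iff, Int.natAbs_eq_zero, ZMod.valMinAbs_eq_zero,
    sub_eq_zero] at h
  exact Prod.ext h.1 h.2

lemma card_filter_torusDist_eq_le (x : Vtx N) {d : ℕ} (hd : 0 < d) :
    #{v | torusDist N x v = d} ≤ 4 * d := by
  let coords : Vtx N → ℤ × ℤ := fun v => ((x.1 - v.1).valMinAbs, (x.2 - v.2).valMinAbs)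
  have hcoords : Function.Injective coords := by
    intro v w h
    simp only [coords, Prod.mk.injEq, ZMod.valMinAbs_inj, sub_right_inj] at h
    exact Prod.ext h.1 h.2
  rw [← card_image_of_injective _ hcoords]
  refine card_le_of_natAbs_add_natAbs_eq hd fun p hp => ?_
  obtain ⟨v, hv, rfl⟩ := mem_image.1 hp
  rw [← (mem_filter.1 hv).2, torusDist_eq]

lemma sum_inv_torusDist_le (x : Vtx N) :
    ∑ v ∈ univ.erase x, (torusDist N x v : ℝ)⁻¹ ≤ 4 * N := by
  have hmaps : ∀ v ∈ univ.erase x, torusDist N x v ∈ Icc 1 N := fun v hv =>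
    mem_Icc.2 ⟨torusDist_pos (ne_of_mem_erase hv).symm, torusDist_le x v⟩
  rw [← sum_fiberwise_of_maps_to hmaps]
  calc ∑ d ∈ Icc 1 N, ∑ v ∈ univ.erase x with torusDist N x v = d, (torusDist N x v : ℝ)⁻¹
      = ∑ d ∈ Icc 1 N, #{v ∈ univ.erase x | torusDist N x v = d} * (d : ℝ)⁻¹ := by
        refine sum_congr rfl fun d _ => ?_
        rw [sum_congr rfl fun v hv => by rw [(mem_filter.1 hv).2], sum_const, nsmul_eq_mul]
    _ ≤ ∑ d ∈ Icc 1 N, (4 : ℝ) := by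
        refine sum_le_sum fun d hd => ?_
        have hd : 0 < d := (mem_Icc.1 hd).1
        have hcard : #{v ∈ univ.erase x | torusDist N x v = d} ≤ 4 * d :=
          (card_le_card (filter_subset_filter _ (erase_subset _ _))).trans
            (card_filter_torusDist_eq_le x hd)
        calc _ ≤ ((4 * d : ℕ) : ℝ) * (d : ℝ)⁻¹ := by gcongr
          _ = 4 := by push_cast; field_simp
    _ = 4 * N := by simp [mul_comm]

end TorusDist

section Chain

variable {N : ℕ} {c : ℝ}

lemma edgeProb_nonneg (hc : 0 ≤ c) (u v : Vtx N) : 0 ≤ edgeProb N c u v := by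
  unfold edgeProb
  split_ifs
  exacts [le_rfl, le_min (by positivity) zero_le_one]

lemma edgeProb_le_div_mul {u v : Vtx N} (h : u ≠ v) :
    edgeProb N c u v ≤ c / (N * torusDist N u v) := by
  rw [edgeProb, if_neg h]
  exact min_le_left _ _

variable [NeZero N]

lemma edgeProb_le_div (hc : 0 ≤ c) (u v : Vtx N) : edgeProb N c u v ≤ c / N := by
  by_cases h : u = v
  · simp only [edgeProb, if_pos h]
    positivity
  have hρ : (1 : ℝ) ≤ torusDist N u v := by exact_mod_cast torusDist_pos h
  have hN : (0 : ℝ) < N := by exact_mod_cast Nat.pos_of_neZero N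
  calc edgeProb N c u v ≤ c / (N * torusDist N u v) := edgeProb_le_div_mul h
    _ ≤ c / N := div_le_div_of_nonneg_left hc hN (le_mul_of_one_le_right hN.le hρ)

lemma div_sq_le_edgeProb (hc : 0 ≤ c) (hcN : c ≤ N ^ 2) {u v : Vtx N} (h : u ≠ v) :
    c / N ^ 2 ≤ edgeProb N c u v := by
  have hN : (0 : ℝ) < N := by exact_mod_cast Nat.pos_of_neZero N
  have hρ₀ : (0 : ℝ) < torusDist N u v := by exact_mod_cast torusDist_pos h
  have hρN : (torusDist N u v : ℝ) ≤ N := by exact_mod_cast torusDist_le u v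
  rw [edgeProb, if_neg h]
  refine le_min ?_ ((div_le_one (by positivity)).2 hcN)
  rw [sq]
  gcongr

lemma ZNA_le (hc : 0 ≤ c) (A : Finset (Vtx N)) (x : Vtx N) : ZNA N c A x ≤ 4 * c := by
  have hN : (0 : ℝ) < N := by exact_mod_cast Nat.pos_of_neZero N
  calc ZNA N c A x ≤ ∑ v ∈ (univ \ A).erase x, c / N * (torusDist N x v : ℝ)⁻¹ := by
        refine sum_le_sum fun v hv => ?_
        exact (edgeProb_le_div_mul (ne_of_mem_erase hv).symm).trans_eq
          (by rw [← div_div, div_eq_mul_inv])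
    _ ≤ ∑ v ∈ univ.erase x, c / N * (torusDist N x v : ℝ)⁻¹ :=
        sum_le_sum_of_subset_of_nonneg (erase_subset_erase _ sdiff_subset)
          fun _ _ _ => by positivity
    _ = c / N * ∑ v ∈ univ.erase x, (torusDist N x v : ℝ)⁻¹ := (mul_sum ..).symm
    _ ≤ c / N * (4 * N) := by gcongr; exact sum_inv_torusDist_le x
    _ = 4 * c := by field_simp

lemma half_le_ZNA (hc : 0 ≤ c) (hcN : c ≤ N ^ 2) (hN : 2 ≤ N) {A : Finset (Vtx N)}
    (hA : 4 * #A ≤ N ^ 2) (x : Vtx N) : c / 2 ≤ ZNA N c A x := by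
  have hN₀ : (0 : ℝ) < N := by exact_mod_cast Nat.pos_of_neZero N
  have hcard : N ^ 2 ≤ 2 * #((univ \ A).erase x) := by
    have hsdiff : #(univ \ A) = N ^ 2 - #A := by
      rw [card_sdiff_of_subset (subset_univ A), card_univ, Fintype.card_prod, ZMod.card, sq]
    have herase := pred_card_le_card_erase (s := univ \ A) (a := x)
    have hN4 : 4 ≤ N ^ 2 := by nlinarith
    omega
  have hcardR : (N : ℝ) ^ 2 ≤ 2 * #((univ \ A).erase x) := by exact_mod_cast hcard
  calc c / 2 = (N : ℝ) ^ 2 / 2 * (c / N ^ 2) := by field_simp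
    _ ≤ #((univ \ A).erase x) * (c / N ^ 2) := by gcongr; linarith
    _ ≤ ZNA N c A x := by
        rw [← nsmul_eq_mul]
        exact card_nsmul_le_sum _ _ _ fun v hv =>
          div_sq_le_edgeProb hc hcN (ne_of_mem_erase hv).symm

lemma transPA_nonneg (hc : 0 ≤ c) (A : Finset (Vtx N)) (u v : Vtx N) :
    0 ≤ transPA N c A u v := by
  unfold transPA
  split_ifs
  exacts [le_rfl,
    div_nonneg (edgeProb_nonneg hc u v) (sum_nonneg fun _ _ => edgeProb_nonneg hc _ _)]

lemma sum_transPA_eq_one {A : Finset (Vtx N)} {u : Vtx N} (hZ : ZNA N c A u ≠ 0) :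
    ∑ x ∈ univ \ A, transPA N c A u x = 1 := by
  have hrow : ∑ x ∈ univ \ A, edgeProb N c u x = ZNA N c A u :=
    (sum_erase (univ \ A) (f := edgeProb N c u) (if_pos rfl)).symm
  have hentry : ∀ x ∈ univ \ A, transPA N c A u x = edgeProb N c u x / ZNA N c A u :=
    fun x hx => if_neg (mem_sdiff.1 hx).2
  rw [sum_congr rfl hentry, ← sum_div, hrow, div_self hZ]

lemma transPA_le_two_div (hc : 0 < c) {A : Finset (Vtx N)} {u : Vtx N}
    (hZ : c / 2 ≤ ZNA N c A u) (v : Vtx N) : transPA N c A u v ≤ 2 / N := by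
  have hN : (0 : ℝ) < N := by exact_mod_cast Nat.pos_of_neZero N
  unfold transPA
  split_ifs
  · positivity
  calc edgeProb N c u v / ZNA N c A u ≤ (c / N) / (c / 2) := by
        gcongr
        exact edgeProb_le_div hc.le u v
    _ = 2 / N := by field_simp

lemma inv_four_mul_sq_le_transPA (hc : 0 < c) (hcN : c ≤ N ^ 2) (A : Finset (Vtx N))
    {x v : Vtx N} (hv : v ∉ A) (hxv : x ≠ v) : (4 * N ^ 2 : ℝ)⁻¹ ≤ transPA N c A x v := by
  have hN : (0 : ℝ) < N := by exact_mod_cast Nat.pos_of_neZero N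
  have hp := div_sq_le_edgeProb hc.le hcN hxv
  have hZ : edgeProb N c x v ≤ ZNA N c A x :=
    single_le_sum (f := edgeProb N c x) (fun _ _ => edgeProb_nonneg hc.le _ _)
      (mem_erase.2 ⟨hxv.symm, mem_sdiff.2 ⟨mem_univ v, hv⟩⟩)
  rw [transPA, if_neg hv]
  calc (4 * N ^ 2 : ℝ)⁻¹ = (c / N ^ 2) / (4 * c) := by field_simp
    _ ≤ edgeProb N c x v / ZNA N c A x :=
        div_le_div₀ (edgeProb_nonneg hc.le x v) hp ((hp.trans hZ).trans_lt' (by positivity))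
          (ZNA_le hc.le A x)

end Chain

lemma le_sum_transPA_mul_transPA {N : ℕ} [NeZero N] {c : ℝ} (hc : 0 < c) (hcN : c ≤ N ^ 2)
    {A : Finset (Vtx N)} {u v : Vtx N} (hZ : c / 2 ≤ ZNA N c A u) (hv : v ∉ A) :
    (1 - 2 / N) * (4 * N ^ 2 : ℝ)⁻¹ ≤
      ∑ x ∈ univ \ A, transPA N c A u x * transPA N c A x v := by
  have hvA : v ∈ univ \ A := mem_sdiff.2 ⟨mem_univ v, hv⟩
  have hZ₀ : ZNA N c A u ≠ 0 := ((half_pos hc).trans_le hZ).ne'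
  calc (1 - 2 / N) * (4 * N ^ 2 : ℝ)⁻¹
      ≤ (∑ x ∈ univ \ A, transPA N c A u x - transPA N c A u v) * (4 * N ^ 2 : ℝ)⁻¹ := by
        rw [sum_transPA_eq_one hZ₀]
        gcongr
        exact transPA_le_two_div hc hZ v
    _ = ∑ x ∈ (univ \ A).erase v, transPA N c A u x * (4 * N ^ 2 : ℝ)⁻¹ := by
        rw [← sum_erase_eq_sub hvA, sum_mul]
    _ ≤ ∑ x ∈ (univ \ A).erase v, transPA N c A u x * transPA N c A x v :=
        sum_le_sum fun x hx => mul_le_mul_of_nonneg_left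
          (inv_four_mul_sq_le_transPA hc hcN A hv (ne_of_mem_erase hx))
          (transPA_nonneg hc.le A u x)
    _ ≤ ∑ x ∈ univ \ A, transPA N c A u x * transPA N c A x v :=
        sum_le_sum_of_subset_of_nonneg (erase_subset v _) fun x _ _ =>
          mul_nonneg (transPA_nonneg hc.le A u x) (transPA_nonneg hc.le A x v)

lemma four_mul_mul_rpow_four_thirds_le_sq {K x : ℝ} (hK : 0 ≤ K)
    (hx : (4 * K) ^ ((3 : ℝ) / 2) ≤ x) : 4 * (K * x ^ ((4 : ℝ) / 3)) ≤ x ^ 2 := by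
  have hx₀ : 0 ≤ x := (Real.rpow_nonneg (by positivity) _).trans hx
  have h4K : 4 * K ≤ x ^ ((2 : ℝ) / 3) := by
    calc 4 * K = ((4 * K) ^ ((3 : ℝ) / 2)) ^ ((2 : ℝ) / 3) := by
          rw [← Real.rpow_mul (by positivity)]; norm_num
      _ ≤ x ^ ((2 : ℝ) / 3) := by gcongr
  calc 4 * (K * x ^ ((4 : ℝ) / 3)) = 4 * K * x ^ ((4 : ℝ) / 3) := by ring
    _ ≤ x ^ ((2 : ℝ) / 3) * x ^ ((4 : ℝ) / 3) := by gcongr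
    _ = x ^ 2 := by rw [← Real.rpow_add' hx₀ (by norm_num)]; norm_num

lemma ccr_pos : 0 < ccr := by
  unfold ccr
  have := Real.log_pos one_lt_two
  positivity

lemma ccr_lt_three_eighths : ccr < 3 / 8 := by
  have hlog := Real.log_two_gt_d9
  rw [ccr, div_lt_div_iff₀ (by linarith) (by norm_num)]
  linarith

/-- At criticality, for every `K > 0` there is `N₀` such that for every `N ≥ N₀`,
every `A ⊆ V_N` with `|A| ≤ K·N^{4/3}` and all `u, v ∈ V_N ∖ A`,
`P_A²(u,v) = Σ_{x ∈ V_N∖A} P_A(u,x)·P_A(x,v) ≥ (c/2)·(1/N²)`. -/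
theorem stmt15 (K : ℝ) (hK : 0 < K) :
    ∃ N₀ : ℕ, ∀ (N : ℕ) [NeZero N], N₀ ≤ N →
      ∀ A : Finset (Vtx N), (A.card : ℝ) ≤ K * (N : ℝ) ^ ((4 : ℝ) / 3) →
        ∀ u v : Vtx N, u ∉ A → v ∉ A →
          ccr / 2 * (1 / (N : ℝ) ^ 2) ≤
            ∑ x ∈ Finset.univ \ A, transPA N ccr A u x * transPA N ccr A x v := by
  refine ⟨max 8 ⌈(4 * K) ^ ((3 : ℝ) / 2)⌉₊, fun N _ hN A hA u v _ hv => ?_⟩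
  have hN8 : 8 ≤ N := (le_max_left _ _).trans hN
  have hN8R : (8 : ℝ) ≤ N := by exact_mod_cast hN8
  have hA' : 4 * #A ≤ N ^ 2 := by
    have hx : (4 * K) ^ ((3 : ℝ) / 2) ≤ N :=
      (Nat.le_ceil _).trans (by exact_mod_cast (le_max_right _ _).trans hN)
    have hKN := four_mul_mul_rpow_four_thirds_le_sq hK.le hx
    exact_mod_cast (by linarith : (4 * #A : ℝ) ≤ (N : ℝ) ^ 2)
  have hcN : ccr ≤ (N : ℝ) ^ 2 := by nlinarith [ccr_lt_three_eighths]
  have hZ := half_le_ZNA ccr_pos.le hcN (by omega) hA' u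
  refine le_trans ?_ (le_sum_transPA_mul_transPA ccr_pos hcN hZ hv)
  have h2N : 2 / (N : ℝ) ≤ 1 / 4 := by
    rw [div_le_div_iff₀ (by linarith) (by norm_num)]; linarith
  have hccr := ccr_lt_three_eighths
  calc ccr / 2 * (1 / (N : ℝ) ^ 2) ≤ (1 - 2 / N) / 4 * (1 / (N : ℝ) ^ 2) := by
        gcongr ?_ * _; linarith
    _ = (1 - 2 / N) * (4 * N ^ 2 : ℝ)⁻¹ := by ring
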